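/- Let G = (V, E₀) be a finite connected simple graph with positive edge weights w, and for distinct u, v ∈ V define mincut(u,v) as the minimum, over partitions V = A ⊔ B with u ∈ A and v ∈ B, of the total w-weight of edges of E₀ crossing between A and B. Let T be a tree on vertex set V with positive edge weights ω such that: (i) for all distinct u, v ∈ V, mincut(u,v) equals the minimum of ω(e) over edges e on the unique u–v path in T, and (ii) for every tree edge e, the partition of V into the two components of T − e has crossing weight in G equal to ω(e) (T is a Gomory–Hu tree of G). Let F ⊆ V with |F| ≥ 3 be the unique forbidden set, let E_F be the set of tree edges lying on the unique path in T between some pair of vertices of F, and let e_o ∈ E_F have minimum ω-weight. Then the 2-coloring of V given by the two components of T − e_o is a proper coloring of (V, {F}) whose cut cost in G equals ω(e_o), and no proper coloring of (V, {F}) has strictly smaller cut cost in G. -/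
import Mathlib


open scoped Classical

/-- `χ` is a proper coloring: no forbidden set is monochromatic. -/
def ProperColoring {V : Type*} (χ : V → ℕ) (ℱ : Set (Set V)) : Prop :=
  ∀ F ∈ ℱ, ¬ ∃ j, ∀ v ∈ F, χ v = j

/-- The cut cost of a coloring: total weight of edges with differently colored endpoints. -/
noncomputable def cutCost {V : Type*} (G : SimpleGraph V) (w : Sym2 V → ℝ)
    (χ : V → ℕ) : ℝ :=
  ∑ᶠ e ∈ {e ∈ G.edgeSet | ¬ ∀ u ∈ e, ∀ v ∈ e, χ u = χ v}, w e

/-- The total weight of edges of `G` crossing out of the vertex set `A`. -/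
noncomputable def cutWeight {V : Type*} (G : SimpleGraph V) (w : Sym2 V → ℝ)
    (A : Set V) : ℝ :=
  ∑ᶠ e ∈ {e ∈ G.edgeSet | ∃ u v, e = s(u, v) ∧ u ∈ A ∧ v ∉ A}, w e

/-- The minimum cut value between distinct vertices `u` and `v`: the least crossing weight
over bipartitions of `V` separating `u` from `v`. -/
noncomputable def minCut {V : Type*} (G : SimpleGraph V) (w : Sym2 V → ℝ)
    (u v : V) : ℝ :=
  sInf {x : ℝ | ∃ A : Set V, u ∈ A ∧ v ∉ A ∧ x = cutWeight G w A}

/-- `pathEdges T F`: the edges of `T` lying on a path between some pair of distinct vertices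
of `F` (for a tree `T`, this is the union of the unique paths between pairs in `F`). -/
def pathEdges {V : Type*} (T : SimpleGraph V) (F : Set V) : Set (Sym2 V) :=
  {e | ∃ u ∈ F, ∃ v ∈ F, u ≠ v ∧ ∃ p : T.Walk u v, p.IsPath ∧ e ∈ p.edges}

lemma my_finsum_nonneg {V : Type*} [Fintype V] (w : Sym2 V → ℝ) (S : Set (Sym2 V))
    (h : ∀ e ∈ S, 0 ≤ w e) : 0 ≤ ∑ᶠ e ∈ S, w e := by
  rw [finsum_mem_eq_finite_toFinset_sum _ (Set.toFinite S)]
  exact Finset.sum_nonneg (fun e he => h e ((Set.Finite.mem_toFinset _).mp he))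

lemma my_finsum_mono {V : Type*} [Fintype V] (w : Sym2 V → ℝ) (S S' : Set (Sym2 V))
    (hss : S ⊆ S') (h : ∀ e ∈ S', 0 ≤ w e) : ∑ᶠ e ∈ S, w e ≤ ∑ᶠ e ∈ S', w e := by
  rw [finsum_mem_eq_finite_toFinset_sum _ (Set.toFinite S),
    finsum_mem_eq_finite_toFinset_sum _ (Set.toFinite S')]
  refine Finset.sum_le_sum_of_subset_of_nonneg ?_ ?_
  · intro e he
    simp only [Set.Finite.mem_toFinset] at *
    exact hss he
  · intro e he _
    exact h e ((Set.Finite.mem_toFinset _).mp he)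

lemma tree_del_not_reachable {V : Type*} {T : SimpleGraph V} (hT : T.IsTree)
    {u₀ v₀ u v : V} (p : T.Walk u v) (hp : p.IsPath) (he : s(u₀, v₀) ∈ p.edges) :
    ¬ (T.deleteEdges {s(u₀, v₀)}).Reachable u v := by
  intro hr
  obtain ⟨q⟩ := hr
  have hq := q.toPath.2
  have hq' : ((q.toPath : (T.deleteEdges {s(u₀,v₀)}).Walk u v).mapLe
      (SimpleGraph.deleteEdges_le _)).IsPath := hq.mapLe _
  have huniq := hT.IsAcyclic.path_unique ⟨p, hp⟩ ⟨_, hq'⟩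
  have hedges : p.edges = ((q.toPath : (T.deleteEdges {s(u₀,v₀)}).Walk u v).mapLe
      (SimpleGraph.deleteEdges_le _)).edges := congrArg (fun r : T.Path u v => r.1.edges) huniq
  rw [hedges] at he
  have : s(u₀, v₀) ∈ (q.toPath : (T.deleteEdges {s(u₀,v₀)}).Walk u v).edges := by
    simpa [SimpleGraph.Walk.edges_map, Sym2.map_id'] using he
  have := SimpleGraph.Walk.edges_subset_edgeSet _ this
  rw [SimpleGraph.edgeSet_deleteEdges] at this
  simp at this

lemma tree_del_reachable_or {V : Type*} {T : SimpleGraph V} (hT : T.IsTree)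
    {u₀ v₀ : V} (h : T.Adj u₀ v₀) (x : V) :
    (T.deleteEdges {s(u₀, v₀)}).Reachable x u₀ ∨ (T.deleteEdges {s(u₀, v₀)}).Reachable x v₀ := by
  obtain ⟨q0⟩ := hT.isConnected.preconnected x u₀
  set q := q0.toPath with hqdef
  by_cases he : s(u₀, v₀) ∈ (q : T.Walk x u₀).edges
  · right
    have hvs : v₀ ∈ (q : T.Walk x u₀).support :=
      SimpleGraph.Walk.fst_mem_support_of_mem_edges _ (by rwa [Sym2.eq_swap] at he)
    have hdrop : ((q : T.Walk x u₀).dropUntil v₀ hvs).IsPath := q.2.dropUntil hvs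
    have hsingle : (SimpleGraph.Walk.cons h.symm SimpleGraph.Walk.nil : T.Walk v₀ u₀).IsPath := by
      simp [SimpleGraph.Walk.cons_isPath_iff, h.ne']
    have huniq := hT.IsAcyclic.path_unique ⟨_, hdrop⟩ ⟨_, hsingle⟩
    have hde : ((q : T.Walk x u₀).dropUntil v₀ hvs).edges = [s(v₀, u₀)] :=
      congrArg (fun r : T.Path v₀ u₀ => r.1.edges) huniq
    have hnodup : ((q : T.Walk x u₀).edges).Nodup := q.2.isTrail.edges_nodup
    rw [← SimpleGraph.Walk.take_spec (q : T.Walk x u₀) hvs,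
      SimpleGraph.Walk.edges_append] at hnodup
    have hdisj := List.disjoint_of_nodup_append hnodup
    have hnot : s(u₀, v₀) ∉ ((q : T.Walk x u₀).takeUntil v₀ hvs).edges := by
      intro hmem
      exact hdisj hmem (by rw [hde, Sym2.eq_swap]; simp)
    refine ⟨((q : T.Walk x u₀).takeUntil v₀ hvs).transfer _ ?_⟩
    intro e hep
    rw [SimpleGraph.edgeSet_deleteEdges]
    refine ⟨SimpleGraph.Walk.edges_subset_edgeSet _
      ((SimpleGraph.Walk.edges_takeUntil_subset _ hvs) hep), ?_⟩
    simp only [Set.mem_singleton_iff]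
    rintro rfl
    exact hnot hep
  · left
    refine ⟨(q : T.Walk x u₀).transfer _ ?_⟩
    intro e hep
    rw [SimpleGraph.edgeSet_deleteEdges]
    refine ⟨SimpleGraph.Walk.edges_subset_edgeSet _ hep, ?_⟩
    simp only [Set.mem_singleton_iff]
    rintro rfl
    exact he hep

/-- for a Gomory–Hu tree `T` of `G` and a single forbidden set `F` with
`|F| ≥ 3`, cutting a minimum-`ω`-weight edge `e₀` of the `F`-bounded subtree yields a proper
2-coloring whose cut cost in `G` is `ω e₀`, and no proper coloring does strictly better. -/
theorem stmt_13 {V : Type*} [Fintype V] (G : SimpleGraph V) (hG : G.Connected)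
    (w : Sym2 V → ℝ) (hw : ∀ e ∈ G.edgeSet, 0 < w e)
    (T : SimpleGraph V) (hT : T.IsTree) (ω : Sym2 V → ℝ)
    (hGH1 : ∀ u v : V, u ≠ v → ∀ p : T.Walk u v, p.IsPath →
      minCut G w u v = sInf {x : ℝ | ∃ e ∈ p.edges, x = ω e})
    (hGH2 : ∀ u v : V, T.Adj u v →
      cutWeight G w {x | (T.deleteEdges {s(u, v)}).Reachable x u} = ω s(u, v))
    (F : Set V) (hF : 3 ≤ F.ncard)
    (e₀ : Sym2 V) (u₀ v₀ : V) (he₀ : e₀ = s(u₀, v₀))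
    (he₀F : e₀ ∈ pathEdges T F)
    (hmin : ∀ e ∈ pathEdges T F, ω e₀ ≤ ω e) :
    ProperColoring (fun x => if (T.deleteEdges {e₀}).Reachable x u₀ then 0 else 1) {F} ∧
    cutCost G w (fun x => if (T.deleteEdges {e₀}).Reachable x u₀ then 0 else 1) = ω e₀ ∧
    (∀ χ' : V → ℕ, ProperColoring χ' {F} → ω e₀ ≤ cutCost G w χ') := by
  subst he₀
  obtain ⟨a₁, ha₁, b₁, hb₁, hab₁, p₁, hp₁, hep₁⟩ := he₀F
  have hadj : T.Adj u₀ v₀ := T.mem_edgeSet.mp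
    (SimpleGraph.Walk.edges_subset_edgeSet _ hep₁)
  set D := T.deleteEdges {s(u₀, v₀)} with hD
  set χ : V → ℕ := fun x => if D.Reachable x u₀ then 0 else 1 with hχ
  set A : Set V := {x | D.Reachable x u₀} with hA
  -- key: the two colors differ across F
  have hproper : ProperColoring χ {F} := by
    rintro F' hF' ⟨j, hj⟩
    simp only [Set.mem_singleton_iff] at hF'
    subst hF'
    have hnr : ¬ D.Reachable a₁ b₁ := tree_del_not_reachable hT p₁ hp₁ hep₁
    by_cases hru : D.Reachable a₁ u₀ <;> by_cases hrv : D.Reachable b₁ u₀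
    · exact hnr (hru.trans hrv.symm)
    · have h1 : χ a₁ = 0 := if_pos hru
      have h2 : χ b₁ = 1 := if_neg hrv
      rw [hj a₁ ha₁] at h1; rw [hj b₁ hb₁] at h2; omega
    · have h1 : χ a₁ = 1 := if_neg hru
      have h2 : χ b₁ = 0 := if_pos hrv
      rw [hj a₁ ha₁] at h1; rw [hj b₁ hb₁] at h2; omega
    · have h1 := (tree_del_reachable_or hT hadj a₁).resolve_left hru
      have h2 := (tree_del_reachable_or hT hadj b₁).resolve_left hrv
      exact hnr (h1.trans h2.symm)
  refine ⟨hproper, ?_, ?_⟩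
  · -- cut cost equals ω e₀
    have hset : {e ∈ G.edgeSet | ¬ ∀ u ∈ e, ∀ v ∈ e, χ u = χ v}
        = {e ∈ G.edgeSet | ∃ u v, e = s(u, v) ∧ u ∈ A ∧ v ∉ A} := by
      apply Set.ext
      intro e
      induction e using Sym2.ind with
      | _ a b =>
      simp only [Set.mem_setOf_eq, Sym2.mem_iff]
      constructor
      · rintro ⟨hEd, hne⟩
        refine ⟨hEd, ?_⟩
        have hab : χ a ≠ χ b := by
          intro h
          apply hne
          rintro x (rfl | rfl) y (rfl | rfl) <;> simp [h]
        by_cases hra : D.Reachable a u₀ <;> by_cases hrb : D.Reachable b u₀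
        · exact absurd (by simp [hχ, hra, hrb]) hab
        · exact ⟨a, b, rfl, hra, hrb⟩
        · exact ⟨b, a, Sym2.eq_swap, hrb, hra⟩
        · exact absurd (by simp [hχ, hra, hrb]) hab
      · rintro ⟨hEd, x, y, hxy, hx, hy⟩
        refine ⟨hEd, fun hall => ?_⟩
        have hx' : x ∈ s(a, b) := by rw [hxy]; simp
        have hy' : y ∈ s(a, b) := by rw [hxy]; simp
        have := hall x (by simpa [Sym2.mem_iff] using hx') y (by simpa [Sym2.mem_iff] using hy')
        have hxr : D.Reachable x u₀ := hx
        have hyr : ¬ D.Reachable y u₀ := hy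
        simp only [hχ] at this
        rw [if_pos hxr, if_neg hyr] at this
        exact zero_ne_one this
    rw [← hGH2 u₀ v₀ hadj]
    show cutCost G w χ = cutWeight G w A
    unfold cutCost cutWeight
    rw [hset]
  · -- lower bound
    intro χ' hχ'
    have h1 := hχ' F rfl
    push_neg at h1
    have hFne : F.Nonempty := by
      rcases Set.eq_empty_or_nonempty F with h | h
      · rw [h, Set.ncard_empty] at hF; omega
      · exact h
    obtain ⟨a, ha⟩ := hFne
    obtain ⟨b, hb, hba⟩ := h1 (χ' a)
    have hab : a ≠ b := fun h => hba (h ▸ rfl)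
    obtain ⟨q⟩ := hT.isConnected.preconnected a b
    obtain ⟨p, hpath⟩ := q.toPath
    set B : Set V := {x | χ' x = χ' a} with hB
    have hwnn : ∀ S : Set (Sym2 V), S ⊆ G.edgeSet → 0 ≤ ∑ᶠ e ∈ S, w e := by
      intro S hS
      exact my_finsum_nonneg w S (fun e he => (hw e (hS he)).le)
    have step1 : ω s(u₀, v₀) ≤ minCut G w a b := by
      rw [hGH1 a b hab p hpath]
      have hpe : p.edges ≠ [] := by
        cases p with
        | nil => exact absurd rfl hab
        | cons h q' => simp
      obtain ⟨e, he⟩ := List.exists_mem_of_ne_nil _ hpe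
      refine le_csInf ⟨ω e, e, he, rfl⟩ ?_
      rintro x ⟨e', he', rfl⟩
      exact hmin e' ⟨a, ha, b, hb, hab, p, hpath, he'⟩
    have step2 : minCut G w a b ≤ cutWeight G w B := by
      refine csInf_le ⟨0, ?_⟩ ⟨B, rfl, hba, rfl⟩
      rintro x ⟨C, _, _, rfl⟩
      exact hwnn _ (fun e he => he.1)
    have step3 : cutWeight G w B ≤ cutCost G w χ' := by
      unfold cutCost cutWeight
      refine my_finsum_mono w _ _ ?_ (fun e he => (hw e he.1).le)
      rintro e ⟨hEd, x, y, hxy, hx, hy⟩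
      refine ⟨hEd, fun hall => ?_⟩
      have hx' : x ∈ e := by rw [hxy]; simp
      have hy' : y ∈ e := by rw [hxy]; simp
      have := hall x hx' y hy'
      have hx2 : χ' x = χ' a := hx
      exact hy (show χ' y = χ' a from this ▸ hx2)
    linarith
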